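/- In the Hecke algebra H_n(q) with generic q, the Jones–Ocneanu symmetrizer S_n satisfies S_n² = S_n and σ_i S_n = S_n σ_i = q S_n for all i = 1,...,n-1, where S_n = (1/[n]_q^$) · ^qΣ_n with ^qΣ_n = (σ_1(q)σ_2(q²)···σ_{n-1}(q^{n-1}))(σ_1(q)···σ_{n-2}(q^{n-2}))···(σ_1(q)), σ_i(x) = (xσ_i - x⁻¹σ_i⁻¹)/(q-q⁻¹), and [n]_q^$ = [1]_q![2]_q!···[n]_q!. -/

import Mathlib

/-- The quantum number `[k]_q = (q^k - q^{-k})/(q - q⁻¹)`. -/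
def qnum {K : Type*} [Field K] (q : K) (k : ℕ) : K :=
  (q ^ k - q⁻¹ ^ k) / (q - q⁻¹)

/-- The quantum factorial `[k]_q! = [1]_q [2]_q ⋯ [k]_q`. -/
def qfact {K : Type*} [Field K] (q : K) : ℕ → K
  | 0 => 1
  | k + 1 => qfact q k * qnum q (k + 1)

/-- The quantum superfactorial `[k]_q^$ = [1]_q! [2]_q! ⋯ [k]_q!`. -/
def qsfact {K : Type*} [Field K] (q : K) : ℕ → K
  | 0 => 1
  | k + 1 => qsfact q k * qfact q (k + 1)

/-- The baxterized element `σ_i(x) = (x·σ_i - x⁻¹·σ_i⁻¹)/(q - q⁻¹)`. -/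
def bax {K A : Type*} [Field K] [Ring A] [Module K A] (q x : K) (s si : A) : A :=
  (q - q⁻¹)⁻¹ • (x • s - x⁻¹ • si)

/-- The multiplicative symmetrizer
`^qΣ_n = (σ_1(q)σ_2(q²)⋯σ_{n-1}(q^{n-1}))(σ_1(q)⋯σ_{n-2}(q^{n-2}))⋯(σ_1(q))`. -/
def qSigma {K A : Type*} [Field K] [Ring A] [Module K A]
    (q : K) (σ σinv : ℕ → A) (n : ℕ) : A :=
  ((List.range (n - 1)).map fun t =>
    ((List.range (n - 1 - t)).map fun i =>
      bax q (q ^ (i + 1)) (σ (i + 1)) (σinv (i + 1))).prod).prod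

namespace Stmt15Aux

set_option maxHeartbeats 2000000

/-- denominator-free baxterized generator: `(q-q⁻¹) • (baxterized element)` -/
def bF {K A : Type*} [Field K] [Ring A] [Algebra K A] (q x : K) (s : A) : A :=
  (x - x⁻¹) • s + (x⁻¹ * (q - q⁻¹)) • (1:A)

theorem bF_null {K A : Type*} [Field K] [Ring A] [Algebra K A] {q : K} {s : A}
    (hq : q ≠ 0) (hs : s * s = (q - q⁻¹) • s + 1) :
    bF q q⁻¹ s * bF q q s = 0 ∧ bF q q s * bF q q⁻¹ s = 0 := by
  unfold bF
  constructor <;>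
  · simp only [add_mul, mul_add, smul_mul_assoc, mul_smul_comm, mul_one, one_mul, smul_smul, hs,
      smul_add, inv_inv]
    match_scalars
    all_goals try ring
    all_goals field_simp
    all_goals try ring

theorem bF_ybe {K A : Type*} [Field K] [Ring A] [Algebra K A] {q : K} {u v : A} {x y : K}
    (huvu : u * v * u = v * u * v)
    (hu : u * u = (q - q⁻¹) • u + 1) (hv : v * v = (q - q⁻¹) • v + 1) :
    bF q x u * bF q (x*y) v * bF q y u = bF q y v * bF q (x*y) u * bF q x v := by
  have huvu' : u * (v * u) = v * (u * v) := by
    rw [← mul_assoc, huvu, mul_assoc]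
  unfold bF
  simp only [add_mul, mul_add, smul_mul_assoc, mul_smul_comm, mul_one, one_mul, mul_assoc]
  simp only [huvu', hu, hv]
  simp only [smul_add, smul_smul, mul_one, mul_inv_rev]
  match_scalars
  all_goals try ring
  all_goals field_simp
  all_goals try ring

theorem bF_comm {K A : Type*} [Field K] [Ring A] [Algebra K A] (q : K) {u v : A} (x y : K)
    (h : Commute u v) : Commute (bF q x u) (bF q y v) := by
  unfold bF
  show _ = _
  simp only [add_mul, mul_add, smul_mul_assoc, mul_smul_comm, mul_one, one_mul, smul_smul]
  rw [h.eq]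
  match_scalars <;> ring

theorem mul_triple_rot {A : Type*} [Ring A] {a b c a' b' c' : A}
    (h : a * b * c = a' * b' * c') (X : A) :
    a * (b * (c * X)) = a' * (b' * (c' * X)) := by
  rw [← mul_assoc, ← mul_assoc, h, mul_assoc, mul_assoc]

/-- ascending product `f 1 * f 2 * ⋯ * f m` -/
def Tpr {A : Type*} [Ring A] (f : ℕ → A) : ℕ → A
  | 0 => 1
  | m+1 => Tpr f m * f (m+1)

/-- descending product of `d` letters ending at `j`: `f (j+d-1) * ⋯ * f (j+1) * f j` -/
def Dpr {A : Type*} [Ring A] (f : ℕ → A) : ℕ → ℕ → A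
  | _, 0 => 1
  | j, d+1 => Dpr f (j+1) d * f j

/-- the staircase product `Tpr (m-1) * Tpr (m-2) * ⋯ * Tpr 1 * Tpr 0` -/
def Spr {A : Type*} [Ring A] (f : ℕ → A) : ℕ → A
  | 0 => 1
  | m+1 => Tpr f m * Spr f m

variable {A : Type*} [Ring A] (f : ℕ → A) {N : ℕ}

theorem Dpr_peel : ∀ d j, Dpr f j (d+1) = f (j+d) * Dpr f j d := by
  intro d
  induction d with
  | zero => intro j; simp [Dpr]
  | succ d ih =>
    intro j
    show Dpr f (j+1) (d+1) * f j = f (j+(d+1)) * (Dpr f (j+1) d * f j)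
    rw [ih (j+1), mul_assoc]
    have h : j + 1 + d = j + (d+1) := by omega
    rw [h]

theorem commute_Tpr (x : A) (m : ℕ) (h : ∀ i, 1 ≤ i → i ≤ m → Commute x (f i)) :
    Commute x (Tpr f m) := by
  induction m with
  | zero => exact Commute.one_right x
  | succ m ih =>
    exact (ih (fun i h1 h2 => h i h1 (by omega))).mul_right (h (m+1) (by omega) le_rfl)

theorem commute_Dpr (x : A) : ∀ d j, (∀ i, j ≤ i → i < j + d → Commute x (f i)) →
    Commute x (Dpr f j d) := by
  intro d
  induction d with
  | zero => intro j h; exact Commute.one_right x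
  | succ d ih =>
    intro j h
    exact (ih (j+1) (fun i h1 h2 => h i (by omega) (by omega))).mul_right (h j le_rfl (by omega))

theorem stair (hfar : ∀ i j, 1 ≤ i → i + 2 ≤ j → j ≤ N → Commute (f i) (f j))
    (j d : ℕ) (hd : j + 1 + d ≤ N) :
    Dpr f (j+2) d * Tpr f (j+1) = Tpr f j * Dpr f (j+1) (d+1) := by
  have hc : Commute (Dpr f (j+2) d) (Tpr f j) := by
    refine commute_Tpr f _ j (fun i h1 h2 => ?_)
    exact (commute_Dpr f (f i) d (j+2) (fun l hl1 hl2 =>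
      hfar i l h1 (by omega) (by omega))).symm
  show Dpr f (j+2) d * (Tpr f j * f (j+1)) = Tpr f j * Dpr f (j+1) (d+1)
  rw [← mul_assoc, hc.eq, mul_assoc]
  rfl

theorem Qlem (hfar : ∀ i j, 1 ≤ i → i + 2 ≤ j → j ≤ N → Commute (f i) (f j)) :
    ∀ j m, j + 1 ≤ m → m ≤ N →
      Dpr f (j+1) (m - j) * Spr f (j+1) = Spr f j * Dpr f 1 m := by
  intro j
  induction j with
  | zero =>
    intro m _ _
    show Dpr f 1 m * ((1:A) * 1) = 1 * Dpr f 1 m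
    rw [mul_one, mul_one, one_mul]
  | succ j ih =>
    intro m hjm hm
    show Dpr f (j+2) (m - (j+1)) * (Tpr f (j+1) * Spr f (j+1)) = Spr f (j+1) * Dpr f 1 m
    rw [← mul_assoc, stair f hfar j (m - (j+1)) (by omega)]
    have h1 : m - (j+1) + 1 = m - j := by omega
    rw [h1, mul_assoc, ih m (by omega) hm, ← mul_assoc]
    rfl

theorem Spr_right (hfar : ∀ i j, 1 ≤ i → i + 2 ≤ j → j ≤ N → Commute (f i) (f j))
    (m : ℕ) (hm : m ≤ N) : Spr f (m+1) = Spr f m * Dpr f 1 m := by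
  match m with
  | 0 => show Tpr f 0 * Spr f 0 = Spr f 0 * 1; rfl
  | (j+1) =>
    have hq := Qlem f hfar j (j+1) le_rfl hm
    have h1 : j + 1 - j = 1 := by omega
    rw [h1] at hq
    have h2 : Dpr f (j+1) 1 = f (j+1) := by simp [Dpr]
    rw [h2] at hq
    show Tpr f j * f (j+1) * Spr f (j+1) = Spr f (j+1) * Dpr f 1 (j+1)
    rw [mul_assoc, hq, ← mul_assoc]
    rfl

/-- `qSigma` in terms of the structured products. -/
theorem qSigma_eq_Spr {K A : Type*} [Field K] [Ring A] [Algebra K A]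
    (q : K) (σ σinv : ℕ → A) (n : ℕ) :
    qSigma q σ σinv n = Spr (fun k => bax q (q ^ k) (σ k) (σinv k)) n := by
  set F : ℕ → A := fun k => bax q (q ^ k) (σ k) (σinv k) with hFdef
  have inner : ∀ m, ((List.range m).map fun i => bax q (q ^ (i+1)) (σ (i+1)) (σinv (i+1))).prod
      = Tpr F m := by
    intro m
    induction m with
    | zero => rfl
    | succ m ih =>
      rw [List.range_succ, List.map_append, List.prod_append, ih]
      show Tpr F m * (F (m+1) * 1) = Tpr F (m+1)
      rw [mul_one]; rfl
  have combo : ∀ m, ((List.range m).map fun t =>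
      ((List.range (m - t)).map fun i => bax q (q ^ (i+1)) (σ (i+1)) (σinv (i+1))).prod).prod
      = Spr F (m+1) := by
    intro m
    induction m with
    | zero => show (1:A) = (1:A) * (1:A); rw [mul_one]
    | succ m ih =>
      rw [List.range_succ_eq_map, List.map_cons, List.prod_cons, List.map_map]
      have h1 : ((fun t =>
          ((List.range (m + 1 - t)).map fun i =>
            bax q (q ^ (i+1)) (σ (i+1)) (σinv (i+1))).prod) ∘ Nat.succ)
          = fun t => ((List.range (m - t)).map fun i =>
            bax q (q ^ (i+1)) (σ (i+1)) (σinv (i+1))).prod := by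
        funext t
        have : m + 1 - Nat.succ t = m - t := by omega
        simp [Function.comp, this]
      rw [h1, ih, Nat.sub_zero, inner]
      rfl
  match n with
  | 0 => rfl
  | (m+1) =>
    show ((List.range (m+1-1)).map fun t =>
      ((List.range (m+1-1-t)).map fun i =>
        bax q (q ^ (i+1)) (σ (i+1)) (σinv (i+1))).prod).prod = Spr F (m+1)
    have h2 : m + 1 - 1 = m := rfl
    rw [h2]
    exact combo m

end Stmt15Aux

namespace Stmt15Aux

theorem absorb_left {K A : Type*} [Field K] [Ring A] [Algebra K A] {q : K}
    (hq0 : q ≠ 0) (hδ : q - q⁻¹ ≠ 0) {s X : A}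
    (h : bF q q⁻¹ s * X = 0) : s * X = q • X := by
  have e : bF q q⁻¹ s * X = (q⁻¹ - q) • (s * X) + (q * (q - q⁻¹)) • X := by
    unfold bF
    rw [inv_inv, add_mul, smul_mul_assoc, smul_mul_assoc, one_mul]
  rw [e] at h
  have hδ' : q⁻¹ - q ≠ 0 := by
    intro hh; apply hδ; have : q - q⁻¹ = -(q⁻¹ - q) := by ring
    rw [this, hh, neg_zero]
  have h2 : (q⁻¹ - q) • (s * X) = (-(q * (q - q⁻¹))) • X := by
    rw [neg_smul]; exact eq_neg_of_add_eq_zero_left h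
  calc s * X = ((q⁻¹ - q)⁻¹ * (q⁻¹ - q)) • (s * X) := by
        rw [inv_mul_cancel₀ hδ', one_smul]
    _ = (q⁻¹ - q)⁻¹ • ((q⁻¹ - q) • (s * X)) := by rw [mul_smul]
    _ = (q⁻¹ - q)⁻¹ • ((-(q * (q - q⁻¹))) • X) := by rw [h2]
    _ = ((q⁻¹ - q)⁻¹ * (-(q * (q - q⁻¹)))) • X := by rw [← mul_smul]
    _ = q • X := by
        congr 1
        rw [inv_mul_eq_iff_eq_mul₀ hδ']
        ring

theorem absorb_right {K A : Type*} [Field K] [Ring A] [Algebra K A] {q : K}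
    (hq0 : q ≠ 0) (hδ : q - q⁻¹ ≠ 0) {s X : A}
    (h : X * bF q q⁻¹ s = 0) : X * s = q • X := by
  have e : X * bF q q⁻¹ s = (q⁻¹ - q) • (X * s) + (q * (q - q⁻¹)) • X := by
    unfold bF
    rw [inv_inv, mul_add, mul_smul_comm, mul_smul_comm, mul_one]
  rw [e] at h
  have hδ' : q⁻¹ - q ≠ 0 := by
    intro hh; apply hδ; have : q - q⁻¹ = -(q⁻¹ - q) := by ring
    rw [this, hh, neg_zero]
  have h2 : (q⁻¹ - q) • (X * s) = (-(q * (q - q⁻¹))) • X := by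
    rw [neg_smul]; exact eq_neg_of_add_eq_zero_left h
  calc X * s = ((q⁻¹ - q)⁻¹ * (q⁻¹ - q)) • (X * s) := by
        rw [inv_mul_cancel₀ hδ', one_smul]
    _ = (q⁻¹ - q)⁻¹ • ((q⁻¹ - q) • (X * s)) := by rw [mul_smul]
    _ = (q⁻¹ - q)⁻¹ • ((-(q * (q - q⁻¹))) • X) := by rw [h2]
    _ = ((q⁻¹ - q)⁻¹ * (-(q * (q - q⁻¹)))) • X := by rw [← mul_smul]
    _ = q • X := by
        congr 1
        rw [inv_mul_eq_iff_eq_mul₀ hδ']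
        ring

theorem bF_eval {K A : Type*} [Field K] [Ring A] [Algebra K A] {q : K}
    (hq0 : q ≠ 0) (k : ℕ) {s X : A} (h : s * X = q • X) :
    bF q (q^k) s * X = (q^(k+1) - q⁻¹^(k+1)) • X := by
  unfold bF
  rw [add_mul, smul_mul_assoc, smul_mul_assoc, one_mul, h, smul_smul, ← add_smul]
  congr 1
  simp only [inv_pow]
  field_simp
  ring

end Stmt15Aux

namespace Stmt15Aux

set_option maxHeartbeats 4000000 in
theorem master {K A : Type*} [Field K] [Ring A] [Algebra K A] (n : ℕ) (q : K)
    (hq0 : q ≠ 0) (hq2 : q ^ 2 ≠ 1)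
    (σ σinv : ℕ → A)
    (hinv : ∀ i, 1 ≤ i → i ≤ n - 1 → σ i * σinv i = 1 ∧ σinv i * σ i = 1)
    (hbraid : ∀ i, 1 ≤ i → i + 1 ≤ n - 1 →
      σ i * σ (i + 1) * σ i = σ (i + 1) * σ i * σ (i + 1))
    (hcomm : ∀ i j, 1 ≤ i → i + 2 ≤ j → j ≤ n - 1 → σ i * σ j = σ j * σ i)
    (hhecke : ∀ i, 1 ≤ i → i ≤ n - 1 → σ i * σ i = (q - q⁻¹) • σ i + 1) :
    (qSigma q σ σinv n * qSigma q σ σinv n = qsfact q n • qSigma q σ σinv n) ∧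
    (∀ i, 1 ≤ i → i ≤ n - 1 →
      σ i * qSigma q σ σinv n = q • qSigma q σ σinv n ∧
      qSigma q σ σinv n * σ i = q • qSigma q σ σinv n) := by
  have hδ : q - q⁻¹ ≠ 0 := by
    intro h
    apply hq2
    have hq' : q = q⁻¹ := by
      have := sub_eq_zero.mp h; exact this
    calc q ^ 2 = q * q := sq q
      _ = q * q⁻¹ := by rw [← hq']
      _ = 1 := mul_inv_cancel₀ hq0
  have hσinv : ∀ i, 1 ≤ i → i ≤ n - 1 → σinv i = σ i - (q - q⁻¹) • 1 := by
    intro i h1 h2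
    have hiv := hinv i h1 h2
    have key : σ i * (σ i - (q - q⁻¹) • 1) = 1 := by
      rw [mul_sub, hhecke i h1 h2, mul_smul_comm, mul_one]
      abel
    calc σinv i = σinv i * (σ i * (σ i - (q - q⁻¹) • 1)) := by rw [key, mul_one]
      _ = (σinv i * σ i) * (σ i - (q - q⁻¹) • 1) := by rw [mul_assoc]
      _ = σ i - (q - q⁻¹) • 1 := by rw [hiv.2, one_mul]
  set F : ℕ → A := fun k => bax q (q ^ k) (σ k) (σinv k) with hFdef
  have hF : ∀ k, 1 ≤ k → k ≤ n - 1 → F k = (q - q⁻¹)⁻¹ • bF q (q ^ k) (σ k) := by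
    intro k h1 h2
    show bax q (q ^ k) (σ k) (σinv k) = _
    rw [hσinv k h1 h2]
    unfold bax bF
    module
  have hfar : ∀ i j, 1 ≤ i → i + 2 ≤ j → j ≤ n - 1 → Commute (F i) (F j) := by
    intro i j h1 h2 h3
    rw [hF i h1 (by omega), hF j (by omega) h3]
    exact ((bF_comm q _ _ (hcomm i j h1 h2 h3)).smul_left _).smul_right _
  have hqnum1 : qnum q 1 = 1 := by
    unfold qnum; rw [pow_one, pow_one]; exact div_self hδ
  have MAIN : ∀ m, m ≤ n → ∀ i, 1 ≤ i → i + 1 ≤ m →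
      bF q q⁻¹ (σ i) * Spr F m = 0 ∧ Spr F m * bF q q⁻¹ (σ i) = 0 := by
    intro m
    induction m with
    | zero => intro _ i h1 h2; omega
    | succ m ih =>
      intro hm i h1 h2
      by_cases hcase : i + 1 ≤ m
      · have IH := ih (by omega) i h1 hcase
        constructor
        · rw [Spr_right F hfar m (by omega), ← mul_assoc, IH.1, zero_mul]
        · show Tpr F m * Spr F m * bF q q⁻¹ (σ i) = 0
          rw [mul_assoc, IH.2, mul_zero]
      · have him : i = m := by omega
        by_cases hm1' : m = 1
        · subst hm1'
          obtain rfl : i = 1 := him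
          have h2n : 1 ≤ n - 1 := by omega
          have hS2 : Spr F 2 = F 1 := by
            show ((1:A) * F 1) * ((1:A) * (1:A)) = F 1
            rw [one_mul, one_mul, mul_one]
          have hf1 : F 1 = (q - q⁻¹)⁻¹ • bF q q (σ 1) := by
            rw [hF 1 le_rfl h2n, pow_one]
          have hnull := bF_null hq0 (hhecke 1 le_rfl h2n)
          constructor
          · show bF q q⁻¹ (σ 1) * Spr F 2 = 0
            rw [hS2, hf1, mul_smul_comm, hnull.1, smul_zero]
          · show Spr F 2 * bF q q⁻¹ (σ 1) = 0
            rw [hS2, hf1, smul_mul_assoc, hnull.2, smul_zero]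
        · obtain ⟨k, rfl⟩ : ∃ k, m = k + 2 := ⟨m - 2, by omega⟩
          obtain rfl : i = k + 2 := him
          have hm1 : k + 2 ≤ n - 1 := by omega
          have hIH := ih (by omega) (k+1) (by omega) (by omega)
          have hbr : σ (k+2) * σ (k+1) * σ (k+2) = σ (k+1) * σ (k+2) * σ (k+1) :=
            (hbraid (k+1) (by omega) (by omega)).symm
          have hhu := hhecke (k+2) (by omega) hm1
          have hhv := hhecke (k+1) (by omega) (by omega)
          constructor
          · -- LEFT invariance at the top index
            have hxy : q⁻¹ * q ^ (k+2) = q ^ (k+1) := by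
              rw [pow_succ]; field_simp
            have ybeL := bF_ybe (q := q) (x := q⁻¹) (y := q ^ (k+2)) hbr hhu hhv
            rw [hxy] at ybeL
            have hcL : Commute (bF q q⁻¹ (σ (k+2))) (Tpr F k) := by
              refine commute_Tpr F _ k (fun l hl1 hl2 => ?_)
              rw [hF l hl1 (by omega)]
              exact ((bF_comm q _ _ ((hcomm l (k+2) hl1 (by omega) hm1)).symm).smul_right _)
            show bF q q⁻¹ (σ (k+2)) * (Tpr F (k+2) * Spr F (k+2)) = 0
            have hT : Tpr F (k+2) = Tpr F k * (F (k+1) * F (k+2)) := by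
              show Tpr F k * F (k+1) * F (k+2) = _
              rw [mul_assoc]
            rw [hT, hF (k+1) (by omega) (by omega), hF (k+2) (by omega) hm1]
            simp only [smul_mul_assoc, mul_smul_comm, mul_assoc]
            rw [← mul_assoc (bF q q⁻¹ (σ (k+2))) (Tpr F k), hcL.eq, mul_assoc]
            rw [mul_triple_rot ybeL (Spr F (k+2)), hIH.1]
            simp
          · -- RIGHT invariance at the top index
            have hxy : q ^ (k+2) * q⁻¹ = q ^ (k+1) := by
              rw [pow_succ]; field_simp
            have ybeR := bF_ybe (q := q) (x := q ^ (k+2)) (y := q⁻¹) hbr hhu hhv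
            rw [hxy] at ybeR
            have hcR : Commute (bF q q⁻¹ (σ (k+2))) (Dpr F 1 k) := by
              refine commute_Dpr F _ k 1 (fun l hl1 hl2 => ?_)
              rw [hF l hl1 (by omega)]
              exact ((bF_comm q _ _ ((hcomm l (k+2) hl1 (by omega) hm1)).symm).smul_right _)
            rw [Spr_right F hfar (k+2) hm1]
            have hD : Dpr F 1 (k+2) = F (k+2) * (F (k+1) * Dpr F 1 k) := by
              have e1 := Dpr_peel F (k+1) 1
              have e2 := Dpr_peel F k 1
              rw [show 1 + (k+1) = k+2 by omega] at e1
              rw [show 1 + k = k+1 by omega] at e2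
              rw [e1, e2]
            rw [hD, hF (k+1) (by omega) (by omega), hF (k+2) (by omega) hm1]
            simp only [smul_mul_assoc, mul_smul_comm, mul_assoc]
            rw [← hcR.eq, mul_triple_rot ybeR (Dpr F 1 k),
              ← mul_assoc (Spr F (k+2)) (bF q q⁻¹ (σ (k+1))), hIH.2]
            simp
  have hLR : ∀ i, 1 ≤ i → i ≤ n - 1 →
      σ i * Spr F n = q • Spr F n ∧ Spr F n * σ i = q • Spr F n := by
    intro i h1 h2
    have hM := MAIN n le_rfl i h1 (by omega)
    exact ⟨absorb_left hq0 hδ hM.1, absorb_right hq0 hδ hM.2⟩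
  have hFeval : ∀ i, 1 ≤ i → i ≤ n - 1 → F i * Spr F n = qnum q (i+1) • Spr F n := by
    intro i h1 h2
    rw [hF i h1 h2, smul_mul_assoc, bF_eval hq0 i (hLR i h1 h2).1, smul_smul]
    congr 1
    unfold qnum
    rw [div_eq_inv_mul]
  have hDeval : ∀ m, m ≤ n - 1 → Dpr F 1 m * Spr F n = qfact q (m+1) • Spr F n := by
    intro m
    induction m with
    | zero =>
      intro _
      show (1:A) * Spr F n = _
      rw [one_mul]
      have hqf1 : qfact q 1 = 1 := by
        show qfact q 0 * qnum q 1 = 1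
        rw [hqnum1]
        show (1:K) * 1 = 1
        rw [mul_one]
      rw [hqf1, one_smul]
    | succ m ih =>
      intro hm
      rw [Dpr_peel F m 1, show 1 + m = m + 1 by omega, mul_assoc, ih (by omega),
        mul_smul_comm, hFeval (m+1) (by omega) hm, smul_smul]
      rfl
  have hSeval : ∀ m, m ≤ n → Spr F m * Spr F n = qsfact q m • Spr F n := by
    intro m
    induction m with
    | zero =>
      intro _
      show (1:A) * Spr F n = _
      rw [one_mul]
      show _ = (1:K) • Spr F n
      rw [one_smul]
    | succ m ih =>
      intro hm
      rw [Spr_right F hfar m (by omega), mul_assoc, hDeval m (by omega),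
        mul_smul_comm, ih (by omega), smul_smul, mul_comm (qfact q (m+1)) (qsfact q m)]
      rfl
  have hqS : qSigma q σ σinv n = Spr F n := qSigma_eq_Spr q σ σinv n
  refine ⟨?_, ?_⟩
  · rw [hqS]; exact hSeval n le_rfl
  · intro i h1 h2
    rw [hqS]
    exact hLR i h1 h2

end Stmt15Aux

/-- in the Hecke algebra `H_n(q)` (any algebra with invertible generators
`σ_1,…,σ_{n-1}` satisfying the braid and Hecke relations) with generic `q`, the
element `S_n = (1/[n]_q^$)·^qΣ_n` is the Jones–Ocneanu symmetrizer:
`S_n² = S_n` and `σ_i S_n = S_n σ_i = q·S_n` for `i = 1,…,n-1`. -/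
theorem stmt_15 {K A : Type*} [Field K] [Ring A] [Algebra K A] (n : ℕ) (q : K)
    (hq0 : q ≠ 0) (hq2 : q ^ 2 ≠ 1)
    (hgen : ∀ k, 1 ≤ k → k ≤ n → qnum q k ≠ 0)
    (σ σinv : ℕ → A)
    (hinv : ∀ i, 1 ≤ i → i ≤ n - 1 → σ i * σinv i = 1 ∧ σinv i * σ i = 1)
    (hbraid : ∀ i, 1 ≤ i → i + 1 ≤ n - 1 →
      σ i * σ (i + 1) * σ i = σ (i + 1) * σ i * σ (i + 1))
    (hcomm : ∀ i j, 1 ≤ i → i + 2 ≤ j → j ≤ n - 1 → σ i * σ j = σ j * σ i)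
    (hhecke : ∀ i, 1 ≤ i → i ≤ n - 1 → σ i * σ i = (q - q⁻¹) • σ i + 1) :
    (qsfact q n)⁻¹ • qSigma q σ σinv n * ((qsfact q n)⁻¹ • qSigma q σ σinv n) =
        (qsfact q n)⁻¹ • qSigma q σ σinv n ∧
      ∀ i, 1 ≤ i → i ≤ n - 1 →
        σ i * ((qsfact q n)⁻¹ • qSigma q σ σinv n) = q • ((qsfact q n)⁻¹ • qSigma q σ σinv n) ∧
        ((qsfact q n)⁻¹ • qSigma q σ σinv n) * σ i = q • ((qsfact q n)⁻¹ • qSigma q σ σinv n) := by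
  obtain ⟨hidem, hinvr⟩ := Stmt15Aux.master n q hq0 hq2 σ σinv hinv hbraid hcomm hhecke
  have hqf : ∀ k, k ≤ n → qfact q k ≠ 0 := by
    intro k
    induction k with
    | zero => intro _; exact one_ne_zero
    | succ k ih =>
      intro hk
      show qfact q k * qnum q (k+1) ≠ 0
      exact mul_ne_zero (ih (by omega)) (hgen (k+1) (by omega) hk)
  have hqs : ∀ k, k ≤ n → qsfact q k ≠ 0 := by
    intro k
    induction k with
    | zero => intro _; exact one_ne_zero
    | succ k ih =>
      intro hk
      show qsfact q k * qfact q (k+1) ≠ 0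
      exact mul_ne_zero (ih (by omega)) (hqf (k+1) hk)
  have hc : qsfact q n ≠ 0 := hqs n le_rfl
  constructor
  · rw [smul_mul_smul_comm, hidem, smul_smul]
    congr 1
    field_simp
  · intro i h1 h2
    have h := hinvr i h1 h2
    constructor
    · rw [mul_smul_comm, h.1, smul_comm]
    · rw [smul_mul_assoc, h.2, smul_comm]
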